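/- Let ε ∈ (0, 1/180] and let n ≥ 1/(7ε²) be an integer. If H is an n-vertex F5-free 3-graph with minimum degree δ(H) > (1/12 + ε)n², then the shadow ∂H is K5-free: ∂H contains no complete subgraph on 5 vertices. -/

import Mathlib

/-!
If two vertices `u, u'` lie in a common edge `uu'w`, then `F₅`-freeness forces every pair in
both links to contain `w`, so the two links share at most `n` pairs. Inclusion–exclusion over a
clique `S` of the shadow then gives `∑_{v ∈ S} deg v ≤ |∂H| + (|S| choose 2) n`. With the
minimum degree condition, this rules out a `K₆` in the shadow (using only `|∂H| ≤ n²/2`), so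
Turán's theorem gives `|∂H| ≤ 2n²/5`, and the same count then rules out a `K₅`, since
`5/12 > 2/5`. Both contradictions only need `εn ≥ 5/2`, which follows from `n ≥ 1/(7ε²)`
and `ε ≤ 1/180`.
-/

open Finset

section Defs

variable {V : Type*} [DecidableEq V]

/-- The degree of a vertex `v` in the 3-graph `H`: the number of edges containing `v`. -/
def degH (H : Finset (Finset V)) (v : V) : ℕ :=
  (H.filter fun e => v ∈ e).card

/-- `H` contains a copy of the generalized triangle `F₅ = {abc, abd, cde}`. -/
def HasF5 (H : Finset (Finset V)) : Prop :=
  ∃ a b c d e : V,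
    a ≠ b ∧ a ≠ c ∧ a ≠ d ∧ a ≠ e ∧ b ≠ c ∧ b ≠ d ∧ b ≠ e ∧ c ≠ d ∧ c ≠ e ∧ d ≠ e ∧
    ({a, b, c} : Finset V) ∈ H ∧ ({a, b, d} : Finset V) ∈ H ∧ ({c, d, e} : Finset V) ∈ H

/-- `H` contains a copy of `K₄³⁻ = {abc, abd, acd}`. -/
def HasK43m (H : Finset (Finset V)) : Prop :=
  ∃ a b c d : V,
    a ≠ b ∧ a ≠ c ∧ a ≠ d ∧ b ≠ c ∧ b ≠ d ∧ c ≠ d ∧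
    ({a, b, c} : Finset V) ∈ H ∧ ({a, b, d} : Finset V) ∈ H ∧ ({a, c, d} : Finset V) ∈ H

/-- `H` is 3-partite: the vertex set can be partitioned into three parts so that every
edge has at most one vertex in each part. -/
def Tripartite (H : Finset (Finset V)) : Prop :=
  ∃ P : V → Fin 3, ∀ e ∈ H, ∀ u ∈ e, ∀ v ∈ e, u ≠ v → P u ≠ P v

/-- The shadow graph `∂H` of the 3-graph `H`: two distinct vertices are adjacent iff
they lie in a common edge of `H`. -/
def shadowG (H : Finset (Finset V)) : SimpleGraph V where
  Adj u v := u ≠ v ∧ ∃ e ∈ H, u ∈ e ∧ v ∈ e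
  symm := by
    constructor
    rintro u v ⟨hne, e, he, hu, hv⟩
    exact ⟨hne.symm, e, he, hv, hu⟩
  loopless := by constructor; rintro u ⟨hne, -⟩; exact hne rfl

end Defs

theorem Finset.sum_card_le_card_biUnion_add {ι α : Type*} [DecidableEq ι] [DecidableEq α]
    (L : ι → Finset α) (N : ℕ) (s : Finset ι)
    (hL : ∀ i ∈ s, ∀ j ∈ s, i ≠ j → #(L i ∩ L j) ≤ N) :
    ∑ i ∈ s, #(L i) ≤ #(s.biUnion L) + (#s).choose 2 * N := by
  induction s using Finset.induction_on with
  | empty => simp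
  | @insert a s ha ih =>
    have ih := ih fun i hi j hj hij => hL i (mem_insert_of_mem hi) j (mem_insert_of_mem hj) hij
    have hinter : #(L a ∩ s.biUnion L) ≤ #s * N :=
      calc #(L a ∩ s.biUnion L) = #(s.biUnion fun j => L a ∩ L j) := by rw [inter_biUnion]
        _ ≤ ∑ j ∈ s, #(L a ∩ L j) := card_biUnion_le
        _ ≤ ∑ _j ∈ s, N := sum_le_sum fun j hj =>
            hL a (mem_insert_self a s) j (mem_insert_of_mem hj) (ne_of_mem_of_not_mem hj ha).symm
        _ = #s * N := by rw [sum_const, smul_eq_mul]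
    have hunion := card_union_add_card_inter (L a) (s.biUnion L)
    have hchoose : (#s + 1).choose 2 = #s + (#s).choose 2 := by
      rw [Nat.choose_succ_succ', Nat.choose_one_right]
    rw [sum_insert ha, biUnion_insert, card_insert_of_notMem ha, hchoose, add_mul]
    omega

theorem SimpleGraph.CliqueFree.mul_card_edgeFinset_le {V : Type*} [Fintype V]
    {G : SimpleGraph V} [DecidableRel G.Adj] {r : ℕ} (hG : G.CliqueFree (r + 1)) :
    2 * r * #G.edgeFinset ≤ (r - 1) * Fintype.card V ^ 2 := by
  rcases r.eq_zero_or_pos with rfl | hr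
  · simp
  obtain ⟨T, _, hT⟩ := SimpleGraph.exists_isTuranMaximal (V := V) hr
  calc 2 * r * #G.edgeFinset ≤ 2 * r * #T.edgeFinset := Nat.mul_le_mul_left _ (hT.2 hG)
    _ = 2 * r * #(SimpleGraph.turanGraph (Fintype.card V) r).edgeFinset := by
        rw [((SimpleGraph.isTuranMaximal_iff_nonempty_iso_turanGraph hr).mp hT).some
          |>.card_edgeFinset_eq]
    _ ≤ (r - 1) * Fintype.card V ^ 2 := SimpleGraph.mul_card_edgeFinset_turanGraph_le

section Link

variable {V : Type*} [DecidableEq V] {H : Finset (Finset V)}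

def link (H : Finset (Finset V)) (v : V) : Finset (Finset V) :=
  (H.filter (v ∈ ·)).image (·.erase v)

theorem mem_link {v : V} {p : Finset V} : p ∈ link H v ↔ v ∉ p ∧ insert v p ∈ H := by
  constructor
  · simp only [link, mem_image, mem_filter]
    rintro ⟨e, ⟨he, hve⟩, rfl⟩
    exact ⟨notMem_erase v e, by rwa [insert_erase hve]⟩
  · rintro ⟨hvp, hp⟩
    exact mem_image.mpr ⟨insert v p, mem_filter.mpr ⟨hp, mem_insert_self v p⟩,
      erase_insert hvp⟩

theorem card_link (H : Finset (Finset V)) (v : V) : #(link H v) = degH H v := by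
  refine card_image_of_injOn fun e he e' he' hee' => ?_
  simp only [coe_filter, Set.mem_ofPred_eq] at he he'
  rw [← insert_erase he.2, ← insert_erase he'.2]
  exact congrArg (insert v) hee'

theorem card_eq_two_of_mem_link (h3 : ∀ e ∈ H, #e = 3) {v : V} {p : Finset V}
    (hp : p ∈ link H v) : #p = 2 := by
  obtain ⟨hvp, hp⟩ := mem_link.mp hp
  have := h3 _ hp
  rw [card_insert_of_notMem hvp] at this
  omega

theorem card_biUnion_link_le_card_edgeFinset [Fintype V] [DecidableRel (shadowG H).Adj]
    (h3 : ∀ e ∈ H, #e = 3) (s : Finset V) :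
    #(s.biUnion (link H)) ≤ #(shadowG H).edgeFinset := by
  refine (card_le_card fun p hp => ?_).trans (card_image_le (f := Sym2.toFinset))
  obtain ⟨v, -, hpv⟩ := mem_biUnion.mp hp
  obtain ⟨x, y, hxy, rfl⟩ := card_eq_two.mp (card_eq_two_of_mem_link h3 hpv)
  have hxyv := (mem_link.mp hpv).2
  refine mem_image.mpr ⟨s(x, y), ?_, Sym2.toFinset_mk_eq⟩
  rw [SimpleGraph.mem_edgeFinset, SimpleGraph.mem_edgeSet]
  exact ⟨hxy, _, hxyv, by simp, by simp⟩

theorem exists_triple_mem_of_shadowG_adj (h3 : ∀ e ∈ H, #e = 3) {u u' : V}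
    (hadj : (shadowG H).Adj u u') : ∃ w, u ≠ w ∧ u' ≠ w ∧ {u, u', w} ∈ H := by
  obtain ⟨huu', e, he, hue, hu'e⟩ := hadj
  have hlt : #({u, u'} : Finset V) < #e := card_le_two.trans_lt (by rw [h3 e he]; norm_num)
  obtain ⟨w, hwe, hw⟩ := exists_mem_notMem_of_card_lt_card hlt
  simp only [mem_insert, mem_singleton, not_or] at hw
  have hsub : {u, u', w} ⊆ e := by
    intro x hx
    simp only [mem_insert, mem_singleton] at hx
    rcases hx with rfl | rfl | rfl <;> assumption
  have hcard : #e ≤ #({u, u', w} : Finset V) := by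
    rw [h3 e he, card_insert_of_notMem, card_pair (Ne.symm hw.2)]
    simp only [mem_insert, mem_singleton, not_or]
    exact ⟨huu', Ne.symm hw.1⟩
  exact ⟨w, Ne.symm hw.1, Ne.symm hw.2, eq_of_subset_of_card_le hsub hcard ▸ he⟩

theorem mem_of_mem_link_inter (h3 : ∀ e ∈ H, #e = 3) (hF5 : ¬ HasF5 H) {u u' w : V}
    (huu' : u ≠ u') (huw : u ≠ w) (hu'w : u' ≠ w) (he : {u, u', w} ∈ H) {p : Finset V}
    (hp : p ∈ link H u ∩ link H u') : w ∈ p := by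
  obtain ⟨hup, hpu⟩ := mem_link.mp (mem_inter.mp hp).1
  obtain ⟨hu'p, hpu'⟩ := mem_link.mp (mem_inter.mp hp).2
  obtain ⟨y, z, hyz, rfl⟩ := card_eq_two.mp (card_eq_two_of_mem_link h3 (mem_inter.mp hp).1)
  by_contra hwp
  simp only [mem_insert, mem_singleton, not_or] at hup hu'p hwp
  refine hF5 ⟨y, z, u, u', w, hyz, Ne.symm hup.1, Ne.symm hu'p.1, Ne.symm hwp.1, Ne.symm hup.2,
    Ne.symm hu'p.2, Ne.symm hwp.2, huu', huw, hu'w, ?_, ?_, he⟩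
  · convert hpu using 1; ext; simp only [mem_insert, mem_singleton]; tauto
  · convert hpu' using 1; ext; simp only [mem_insert, mem_singleton]; tauto

theorem card_link_inter_le [Fintype V] (h3 : ∀ e ∈ H, #e = 3) (hF5 : ¬ HasF5 H) {u u' : V}
    (hadj : (shadowG H).Adj u u') : #(link H u ∩ link H u') ≤ Fintype.card V := by
  obtain ⟨w, huw, hu'w, he⟩ := exists_triple_mem_of_shadowG_adj h3 hadj
  have hsub : link H u ∩ link H u' ⊆ univ.image fun x => {w, x} := by
    intro p hp
    have hwp := mem_of_mem_link_inter h3 hF5 hadj.1 huw hu'w he hp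
    obtain ⟨y, z, -, rfl⟩ := card_eq_two.mp (card_eq_two_of_mem_link h3 (mem_inter.mp hp).1)
    simp only [mem_insert, mem_singleton] at hwp
    rcases hwp with rfl | rfl
    · exact mem_image.mpr ⟨z, mem_univ z, rfl⟩
    · exact mem_image.mpr ⟨y, mem_univ y, pair_comm _ _⟩
  exact (card_le_card hsub).trans (card_image_le.trans_eq card_univ)

end Link

section Counting

variable {V : Type*} [Fintype V] [DecidableEq V] {H : Finset (Finset V)}

theorem sum_degH_le_of_isClique [DecidableRel (shadowG H).Adj] (h3 : ∀ e ∈ H, #e = 3)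
    (hF5 : ¬ HasF5 H) {s : Finset V} (hs : (shadowG H).IsClique (s : Set V)) :
    ∑ v ∈ s, degH H v ≤ #(shadowG H).edgeFinset + (#s).choose 2 * Fintype.card V := by
  simp_rw [← card_link]
  refine (sum_card_le_card_biUnion_add (link H) _ s fun u hu v hv huv =>
    card_link_inter_le h3 hF5 (hs hu hv huv)).trans ?_
  gcongr
  exact card_biUnion_link_le_card_edgeFinset h3 s

theorem mul_lt_card_edgeFinset_add_of_isNClique [DecidableRel (shadowG H).Adj]
    (h3 : ∀ e ∈ H, #e = 3) (hF5 : ¬ HasF5 H) {δ : ℝ} (hδ : ∀ v, δ < degH H v) {k : ℕ}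
    (hk : 0 < k) {s : Finset V}
    (hs : (shadowG H).IsNClique k s) :
    k * δ < #(shadowG H).edgeFinset + k.choose 2 * Fintype.card V := by
  have hne : s.Nonempty := card_pos.mp (hs.card_eq ▸ hk)
  calc k * δ = ∑ _v ∈ s, δ := by rw [sum_const, nsmul_eq_mul, hs.card_eq]
    _ < ∑ v ∈ s, (degH H v : ℝ) := sum_lt_sum_of_nonempty hne fun v _ => hδ v
    _ ≤ #(shadowG H).edgeFinset + k.choose 2 * Fintype.card V := by
      rw [← hs.card_eq]
      exact_mod_cast sum_degH_le_of_isClique h3 hF5 hs.isClique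

theorem shadowG_cliqueFree_six (h3 : ∀ e ∈ H, #e = 3) (hF5 : ¬ HasF5 H) {ε : ℝ}
    (hεn : 5 / 2 ≤ ε * Fintype.card V)
    (hδ : ∀ v, (1 / 12 + ε) * (Fintype.card V : ℝ) ^ 2 < degH H v) :
    (shadowG H).CliqueFree 6 := by
  classical
  intro s hs
  have hcount := mul_lt_card_edgeFinset_add_of_isNClique h3 hF5 hδ (by norm_num) hs
  have hE : (#(shadowG H).edgeFinset : ℝ) ≤ (Fintype.card V).choose 2 := by
    exact_mod_cast SimpleGraph.card_edgeFinset_le_card_choose_two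
  rw [Nat.cast_choose_two] at hE
  norm_num [Nat.choose] at hcount
  nlinarith

end Counting

/-- For `ε ∈ (0, 1/180]` and `n ≥ 1/(7ε²)`, every `n`-vertex `F₅`-free 3-graph with
minimum degree greater than `(1/12 + ε)n²` has a `K₅`-free shadow. -/
theorem F5_shadow_K5_free (ε : ℝ) (hε0 : 0 < ε) (hε : ε ≤ 1 / 180)
    (n : ℕ) (hn : 1 / (7 * ε ^ 2) ≤ (n : ℝ))
    (V : Type*) [Fintype V] [DecidableEq V] (hV : Fintype.card V = n)
    (H : Finset (Finset V)) (h3 : ∀ e ∈ H, e.card = 3)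
    (hF5 : ¬ HasF5 H)
    (hδ : ∀ v : V, (1 / 12 + ε) * (n : ℝ) ^ 2 < (degH H v : ℝ)) :
    (shadowG H).CliqueFree 5 := by
  classical
  subst hV
  have hεn : 5 / 2 ≤ ε * Fintype.card V := by
    rw [div_le_iff₀ (by positivity)] at hn
    nlinarith
  have hturan := (shadowG_cliqueFree_six h3 hF5 hεn hδ).mul_card_edgeFinset_le
  have hE : (10 * #(shadowG H).edgeFinset : ℝ) ≤ 4 * Fintype.card V ^ 2 := by
    exact_mod_cast hturan
  intro s hs
  have hcount := mul_lt_card_edgeFinset_add_of_isNClique h3 hF5 hδ (by norm_num) hs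
  norm_num [Nat.choose] at hcount
  nlinarith
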